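/- (Lemma 1, first variation of v, κ, λ) In the variational setting described, writing the variational field as ∂ₜΓ(0,s) = u₁T + u₂N + u₃B, the derivatives at t = 0 satisfy: v̇ = u₁' − κu₂; κ̇ = u₁κ' + u₂κ²(1−λ²) + u₂'' − (λκ)'u₃ − 2λκu₃'; and λ̇ = u₁λ' + u₂((λκ)''/κ² − (λκ)'κ'/κ³ + λ³κ + λκ) + u₂'(2λ'/κ + (λκ)'/κ²) + u₂''·(λ/κ) − u₃λλ' + u₃'(1+λ²) − u₃''·(κ'/κ³) + u₃'''/κ². -/

import Mathlib

open scoped RealInnerProductSpace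
open Set

noncomputable section

/-- Euclidean 3-space. -/
abbrev E3 : Type := EuclideanSpace ℝ (Fin 3)

/-- Cross product on `E3`. -/
def cross (v w : E3) : E3 :=
  (WithLp.equiv 2 (Fin 3 → ℝ)).symm
    (crossProduct ((WithLp.equiv 2 (Fin 3 → ℝ)) v) ((WithLp.equiv 2 (Fin 3 → ℝ)) w))

/-- `a₁ = ½(κ²(1+λ²)² + μ)`. -/
def a1 (κ lam : ℝ → ℝ) (μ : ℝ) (s : ℝ) : ℝ :=
  (κ s ^ 2 * (1 + lam s ^ 2) ^ 2 + μ) / 2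

/-- `a₂ = κ'(1+λ²)² + 2κ(1+λ²)λλ'`. -/
def a2 (κ lam : ℝ → ℝ) (s : ℝ) : ℝ :=
  deriv κ s * (1 + lam s ^ 2) ^ 2 + 2 * κ s * (1 + lam s ^ 2) * lam s * deriv lam s

/-- `a₃ = −(κ²(1+λ²)²λ + ((κ'/κ)·2λ(1+λ²))' + (2λ(1+λ²))'')`. -/
def a3 (κ lam : ℝ → ℝ) (s : ℝ) : ℝ :=
  -(κ s ^ 2 * (1 + lam s ^ 2) ^ 2 * lam s
    + deriv (fun u => deriv κ u / κ u * (2 * lam u * (1 + lam u ^ 2))) s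
    + deriv (deriv (fun u => 2 * lam u * (1 + lam u ^ 2))) s)

/-- Euler–Lagrange expression `f₁ = a₂' + κa₁ − κλa₃`. -/
def f1 (κ lam : ℝ → ℝ) (μ : ℝ) (s : ℝ) : ℝ :=
  deriv (a2 κ lam) s + κ s * a1 κ lam μ s - κ s * lam s * a3 κ lam s

/-- Euler–Lagrange expression `f₂ = a₃' + κλa₂`. -/
def f2 (κ lam : ℝ → ℝ) (s : ℝ) : ℝ :=
  deriv (a3 κ lam) s + κ s * lam s * a2 κ lam s

/-- `s₁ = 2κλ(1+λ²)`. -/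
def s1 (κ lam : ℝ → ℝ) (s : ℝ) : ℝ := 2 * κ s * lam s * (1 + lam s ^ 2)

/-- `s₂ = s₁'/κ`. -/
def s2 (κ lam : ℝ → ℝ) (s : ℝ) : ℝ := deriv (s1 κ lam) s / κ s

/-- `s₃ = κ(1+λ²)(1−λ²)`. -/
def s3 (κ lam : ℝ → ℝ) (s : ℝ) : ℝ := κ s * (1 + lam s ^ 2) * (1 - lam s ^ 2)

/-- The force vector `b₀ = a₁T + a₂N + a₃B`. -/
def b0vec (κ lam : ℝ → ℝ) (μ : ℝ) (T N B : ℝ → E3) (s : ℝ) : E3 :=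
  a1 κ lam μ s • T s + a2 κ lam s • N s + a3 κ lam s • B s

/-- `J = s₁T + s₂N + s₃B`. -/
def Jvec (κ lam : ℝ → ℝ) (T N B : ℝ → E3) (s : ℝ) : E3 :=
  s1 κ lam s • T s + s2 κ lam s • N s + s3 κ lam s • B s

/-- The torque vector `b₁ = J − γ × b₀`. -/
def b1vec (κ lam : ℝ → ℝ) (μ : ℝ) (γ T N B : ℝ → E3) (s : ℝ) : E3 :=
  Jvec κ lam T N B s - cross (γ s) (b0vec κ lam μ T N B s)

/-! ### Cross product algebra -/

lemma crossE_apply (v w : E3) (i : Fin 3) :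
    cross v w i = ![v 1 * w 2 - v 2 * w 1, v 2 * w 0 - v 0 * w 2, v 0 * w 1 - v 1 * w 0] i := by
  simp [cross, crossProduct, WithLp.equiv]

lemma inner_E3 (v w : E3) : ⟪v, w⟫ = v 0 * w 0 + v 1 * w 1 + v 2 * w 2 := by
  simp [PiLp.inner_apply, Fin.sum_univ_three]; ring

lemma tripleE (a b c : E3) : ⟪a, cross b c⟫ = ⟪c, cross a b⟫ := by
  simp [inner_E3, crossE_apply, Fin.sum_univ_three]; ring

lemma crossE_cross (a b c : E3) : cross a (cross b c) = ⟪a,c⟫ • b - ⟪a,b⟫ • c := by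
  ext i
  fin_cases i <;>
    simp [crossE_apply, inner_E3, Fin.sum_univ_three, PiLp.sub_apply, PiLp.smul_apply,
      smul_eq_mul] <;> ring

lemma crossE_anticomm (a b : E3) : cross a b = - cross b a := by
  ext i; fin_cases i <;> simp [crossE_apply, PiLp.neg_apply] <;> ring

lemma crossE_self (a : E3) : cross a a = 0 := by
  ext i; fin_cases i <;> simp [crossE_apply] <;> ring

def crossLin : E3 →ₗ[ℝ] E3 →ₗ[ℝ] E3 :=
  LinearMap.mk₂ ℝ cross
    (fun a b c => by
      simp only [cross]
      rw [show (WithLp.equiv 2 (Fin 3 → ℝ)) (a + b)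
          = (WithLp.equiv 2 (Fin 3 → ℝ)) a + (WithLp.equiv 2 (Fin 3 → ℝ)) b from rfl]
      rw [map_add]; rfl)
    (fun r a c => by
      simp only [cross]
      rw [show (WithLp.equiv 2 (Fin 3 → ℝ)) (r • a)
          = r • (WithLp.equiv 2 (Fin 3 → ℝ)) a from rfl]
      rw [map_smul]; rfl)
    (fun a b c => by
      simp only [cross]
      rw [show (WithLp.equiv 2 (Fin 3 → ℝ)) (b + c)
          = (WithLp.equiv 2 (Fin 3 → ℝ)) b + (WithLp.equiv 2 (Fin 3 → ℝ)) c from rfl]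
      rw [map_add]; rfl)
    (fun r a c => by
      simp only [cross]
      rw [show (WithLp.equiv 2 (Fin 3 → ℝ)) (r • c)
          = r • (WithLp.equiv 2 (Fin 3 → ℝ)) c from rfl]
      rw [map_smul]; rfl)

lemma crossE_add_left (a b c : E3) : cross (a + b) c = cross a c + cross b c := by
  change crossLin (a + b) c = crossLin a c + crossLin b c
  rw [map_add]; rfl

lemma crossE_smul_left (r : ℝ) (a c : E3) : cross (r • a) c = r • cross a c := by
  change crossLin (r • a) c = r • crossLin a c
  rw [map_smul]; rfl

lemma crossE_add_right (a b c : E3) : cross a (b + c) = cross a b + cross a c :=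
  (crossLin a).map_add b c

lemma crossE_smul_right (r : ℝ) (a c : E3) : cross a (r • c) = r • cross a c :=
  (crossLin a).map_smul r c

def crossL : E3 →L[ℝ] E3 →L[ℝ] E3 :=
  LinearMap.toContinuousLinearMap
    { toFun := fun x => LinearMap.toContinuousLinearMap (crossLin x)
      map_add' := fun a b => by ext v; simp [crossLin]
      map_smul' := fun r a => by ext v; simp [crossLin] }

@[simp] lemma crossL_apply (v w : E3) : crossL v w = cross v w := rfl

/-! ### Derivative rules -/

lemma HasDerivAt.crossE {f g : ℝ → E3} {f' g' : E3} {x : ℝ}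
    (hf : HasDerivAt f f' x) (hg : HasDerivAt g g' x) :
    HasDerivAt (fun s => cross (f s) (g s)) (cross f' (g x) + cross (f x) g') x := by
  have h1 : HasDerivAt (fun s => crossL (f s)) (crossL f') x :=
    (crossL.hasFDerivAt.comp_hasDerivAt x hf)
  have := h1.clm_apply hg
  simpa using this

lemma HasDerivAt.normE {f : ℝ → E3} {f' : E3} {x : ℝ}
    (hf : HasDerivAt f f' x) (hx : f x ≠ 0) :
    HasDerivAt (fun t => ‖f t‖) (⟪f x, f'⟫ / ‖f x‖) x := by
  have hi : HasDerivAt (fun t => ⟪f t, f t⟫) (⟪f x, f'⟫ + ⟪f', f x⟫) x := hf.inner ℝ hf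
  have hne : ⟪f x, f x⟫ ≠ 0 := by
    rw [real_inner_self_eq_norm_sq]
    exact pow_ne_zero 2 (norm_ne_zero_iff.mpr hx)
  have hs := hi.sqrt hne
  have heq : (fun t => Real.sqrt ⟪f t, f t⟫) = fun t => ‖f t‖ := by
    funext t
    rw [real_inner_self_eq_norm_mul_norm, Real.sqrt_mul_self (norm_nonneg _)]
  rw [heq] at hs
  convert hs using 1
  rw [real_inner_self_eq_norm_mul_norm, Real.sqrt_mul_self (norm_nonneg _),
    real_inner_comm f' (f x)]
  field_simp
  ring

/-! ### Partial derivatives and Schwarz symmetry -/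

section Partial

variable {E : Type*} [NormedAddCommGroup E] [NormedSpace ℝ E]

lemma deriv_slice_fst {g : ℝ × ℝ → E} {a b : ℝ} (hg : DifferentiableAt ℝ g (a, b)) :
    HasDerivAt (fun t => g (t, b)) (fderiv ℝ g (a, b) (1, 0)) a := by
  have hline : HasDerivAt (fun t : ℝ => ((t, b) : ℝ × ℝ)) (1, 0) a :=
    (hasDerivAt_id a).prodMk (hasDerivAt_const a b)
  exact hg.hasFDerivAt.comp_hasDerivAt a hline

lemma deriv_slice_snd {g : ℝ × ℝ → E} {a b : ℝ} (hg : DifferentiableAt ℝ g (a, b)) :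
    HasDerivAt (fun s => g (a, s)) (fderiv ℝ g (a, b) (0, 1)) b := by
  have hline : HasDerivAt (fun s : ℝ => ((a, s) : ℝ × ℝ)) (0, 1) b :=
    (hasDerivAt_const b a).prodMk (hasDerivAt_id b)
  exact hg.hasFDerivAt.comp_hasDerivAt b hline

lemma smooth_partial_snd {F : ℝ → ℝ → E} (hF : ContDiff ℝ (⊤ : ℕ∞) fun p : ℝ × ℝ => F p.1 p.2) :
    ContDiff ℝ (⊤ : ℕ∞) (fun p : ℝ × ℝ => deriv (F p.1) p.2) := by
  have hfd : ContDiff ℝ (⊤ : ℕ∞) (fderiv ℝ fun p : ℝ × ℝ => F p.1 p.2) :=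
    hF.fderiv_right (by simp)
  have h2 : ContDiff ℝ (⊤ : ℕ∞)
      (fun p : ℝ × ℝ => fderiv ℝ (fun q : ℝ × ℝ => F q.1 q.2) p ((0:ℝ), (1:ℝ))) :=
    hfd.clm_apply contDiff_const
  convert h2 using 1
  funext p
  exact ((deriv_slice_snd ((hF.differentiable (by simp)) (p.1, p.2))).deriv)

lemma smooth_slice_snd {F : ℝ → ℝ → E} (hF : ContDiff ℝ (⊤ : ℕ∞) fun p : ℝ × ℝ => F p.1 p.2) (t : ℝ) :
    ContDiff ℝ (⊤ : ℕ∞) (F t) := by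
  have : ContDiff ℝ (⊤ : ℕ∞) (fun s : ℝ => ((t, s) : ℝ × ℝ)) := contDiff_const.prodMk contDiff_id
  exact hF.comp this

lemma diffAt_slice_fst {F : ℝ → ℝ → E} (hF : ContDiff ℝ (⊤ : ℕ∞) fun p : ℝ × ℝ => F p.1 p.2)
    (t s : ℝ) : DifferentiableAt ℝ (fun t' => F t' s) t := by
  have hline : DifferentiableAt ℝ (fun t' : ℝ => ((t', s) : ℝ × ℝ)) t :=
    (differentiableAt_id.prodMk (differentiableAt_const s))
  exact ((hF.differentiable (by simp)) (t, s)).comp t hline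

lemma swap_partial {F : ℝ → ℝ → E} (hF : ContDiff ℝ (⊤ : ℕ∞) fun p : ℝ × ℝ => F p.1 p.2) (t s : ℝ) :
    deriv (fun t' => deriv (F t') s) t = deriv (fun s' => deriv (fun t' => F t' s') t) s := by
  set f : ℝ × ℝ → E := fun p => F p.1 p.2 with hf
  have hdiff : Differentiable ℝ f := hF.differentiable (by simp)
  have hf' : ∀ y, HasFDerivAt f (fderiv ℝ f y) y := fun y => (hdiff y).hasFDerivAt
  have hfd : ContDiff ℝ (⊤ : ℕ∞) (fderiv ℝ f) := hF.fderiv_right (by simp)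
  have hf'' : HasFDerivAt (fderiv ℝ f) (fderiv ℝ (fderiv ℝ f) (t, s)) (t, s) :=
    ((hfd.differentiable (by simp)) (t, s)).hasFDerivAt
  have hsymm := second_derivative_symmetric hf' hf'' ((1:ℝ), (0:ℝ)) ((0:ℝ), (1:ℝ))
  have hL : deriv (fun t' => deriv (F t') s) t
      = fderiv ℝ (fderiv ℝ f) (t, s) (1, 0) (0, 1) := by
    have heq : (fun t' => deriv (F t') s) = fun t' => fderiv ℝ f (t', s) (0, 1) := by
      funext t'
      exact (deriv_slice_snd (hdiff (t', s))).deriv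
    rw [heq]
    have happ : (fun t' : ℝ => fderiv ℝ f (t', s) (0, 1))
        = fun t' : ℝ => (ContinuousLinearMap.apply ℝ E ((0:ℝ),(1:ℝ)))
            ((fun p => fderiv ℝ f p) (t', s)) := rfl
    rw [happ]
    have hg : DifferentiableAt ℝ (fun p : ℝ × ℝ =>
        (ContinuousLinearMap.apply ℝ E ((0:ℝ),(1:ℝ))) (fderiv ℝ f p)) (t, s) :=
      ((ContinuousLinearMap.apply ℝ E ((0:ℝ),(1:ℝ))).differentiable.differentiableAt).comp _
        ((hfd.differentiable (by simp)) (t, s))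
    have hder := deriv_slice_fst hg
    rw [hder.deriv]
    have hc : HasFDerivAt (fun p : ℝ × ℝ =>
        (ContinuousLinearMap.apply ℝ E ((0:ℝ),(1:ℝ))) (fderiv ℝ f p))
        ((ContinuousLinearMap.apply ℝ E ((0:ℝ),(1:ℝ))).comp
          (fderiv ℝ (fderiv ℝ f) (t, s))) (t, s) :=
      (ContinuousLinearMap.apply ℝ E ((0:ℝ),(1:ℝ))).hasFDerivAt.comp (t, s) hf''
    rw [hc.fderiv]
    simp
  have hR : deriv (fun s' => deriv (fun t' => F t' s') t) s
      = fderiv ℝ (fderiv ℝ f) (t, s) (0, 1) (1, 0) := by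
    have heq : (fun s' => deriv (fun t' => F t' s') t) = fun s' => fderiv ℝ f (t, s') (1, 0) := by
      funext s'
      exact (deriv_slice_fst (hdiff (t, s'))).deriv
    rw [heq]
    have happ : (fun s' : ℝ => fderiv ℝ f (t, s') (1, 0))
        = fun s' : ℝ => (ContinuousLinearMap.apply ℝ E ((1:ℝ),(0:ℝ)))
            ((fun p => fderiv ℝ f p) (t, s')) := rfl
    rw [happ]
    have hg : DifferentiableAt ℝ (fun p : ℝ × ℝ =>
        (ContinuousLinearMap.apply ℝ E ((1:ℝ),(0:ℝ))) (fderiv ℝ f p)) (t, s) :=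
      ((ContinuousLinearMap.apply ℝ E ((1:ℝ),(0:ℝ))).differentiable.differentiableAt).comp _
        ((hfd.differentiable (by simp)) (t, s))
    have hder := deriv_slice_snd hg
    rw [hder.deriv]
    have hc : HasFDerivAt (fun p : ℝ × ℝ =>
        (ContinuousLinearMap.apply ℝ E ((1:ℝ),(0:ℝ))) (fderiv ℝ f p))
        ((ContinuousLinearMap.apply ℝ E ((1:ℝ),(0:ℝ))).comp
          (fderiv ℝ (fderiv ℝ f) (t, s))) (t, s) :=
      (ContinuousLinearMap.apply ℝ E ((1:ℝ),(0:ℝ))).hasFDerivAt.comp (t, s) hf''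
    rw [hc.fderiv]
    simp
  rw [hL, hR, hsymm]

end Partial

/-! ### Orthonormal frame identities -/

section Frame

variable {e1 e2 e3 : E3}

lemma fr_c21 (h3 : e3 = cross e1 e2) : cross e2 e1 = -e3 := by
  rw [crossE_anticomm, h3]

lemma fr_c23 (h22 : ⟪e2,e2⟫ = 1) (h12 : ⟪e1,e2⟫ = 0) (h3 : e3 = cross e1 e2) :
    cross e2 e3 = e1 := by
  rw [h3, crossE_cross, h22, real_inner_comm, h12]; simp

lemma fr_c31 (h11 : ⟪e1,e1⟫ = 1) (h12 : ⟪e1,e2⟫ = 0) (h3 : e3 = cross e1 e2) :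
    cross e3 e1 = e2 := by
  rw [h3, crossE_anticomm, crossE_cross, h12, h11]; simp

lemma fr_c13 (h11 : ⟪e1,e1⟫ = 1) (h12 : ⟪e1,e2⟫ = 0) (h3 : e3 = cross e1 e2) :
    cross e1 e3 = -e2 := by
  rw [h3, crossE_cross, h12, h11]; simp

lemma fr_c32 (h22 : ⟪e2,e2⟫ = 1) (h12 : ⟪e1,e2⟫ = 0) (h3 : e3 = cross e1 e2) :
    cross e3 e2 = -e1 := by
  rw [crossE_anticomm, fr_c23 h22 h12 h3]

lemma fr_i13 (h3 : e3 = cross e1 e2) : ⟪e1,e3⟫ = 0 := by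
  rw [h3, tripleE, crossE_self, inner_zero_right]

lemma fr_i23 (h3 : e3 = cross e1 e2) : ⟪e2,e3⟫ = 0 := by
  rw [h3, tripleE, tripleE, crossE_self, inner_zero_right]

lemma fr_i33 (h11 : ⟪e1,e1⟫ = 1) (h22 : ⟪e2,e2⟫ = 1) (h12 : ⟪e1,e2⟫ = 0)
    (h3 : e3 = cross e1 e2) : ⟪e3,e3⟫ = 1 := by
  have h := tripleE e3 e1 e2
  rw [fr_c31 h11 h12 h3] at h
  rw [h3] at h ⊢
  rw [h, h22]

end Frame

/-- Derivative of a Frenet-frame combination. -/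
lemma deriv_frame_comb {T N B : ℝ → E3} {κ τ : ℝ → ℝ} {p q r : ℝ → ℝ} {p' q' r' : ℝ} {s : ℝ}
    (hT : HasDerivAt T (κ s • N s) s)
    (hN : HasDerivAt N ((-(κ s)) • T s + τ s • B s) s)
    (hB : HasDerivAt B ((-(τ s)) • N s) s)
    (hp : HasDerivAt p p' s) (hq : HasDerivAt q q' s) (hr : HasDerivAt r r' s) :
    HasDerivAt (fun x => p x • T x + q x • N x + r x • B x)
      ((p' - κ s * q s) • T s + (q' + κ s * p s - τ s * r s) • N s
        + (r' + τ s * q s) • B s) s := by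
  have h := ((hp.smul hT).add (hq.smul hN)).add (hr.smul hB)
  convert h using 1 <;> first | rfl | module


lemma ContDiff.derivTop {E : Type*} [NormedAddCommGroup E] [NormedSpace ℝ E] {f : ℝ → E}
    (hf : ContDiff ℝ (⊤ : ℕ∞) f) : ContDiff ℝ (⊤ : ℕ∞) (deriv f) := by
  have h : ContDiff ℝ (((⊤ : ℕ∞) : WithTop ℕ∞) + 1) f := by
    rwa [show (((⊤ : ℕ∞) : WithTop ℕ∞) + 1) = ((⊤ : ℕ∞) : WithTop ℕ∞) by simp]
  exact (contDiff_succ_iff_deriv.mp h).2.2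

/-! ### Frenet coefficients of the variation field and its s-derivatives -/

def cA1 (u1 u2 u3 κ τ : ℝ → ℝ) (x : ℝ) : ℝ := deriv u1 x - κ x * u2 x
def cB1 (u1 u2 u3 κ τ : ℝ → ℝ) (x : ℝ) : ℝ := deriv u2 x + κ x * u1 x - τ x * u3 x
def cC1 (u1 u2 u3 κ τ : ℝ → ℝ) (x : ℝ) : ℝ := deriv u3 x + τ x * u2 x

def cA1' (u1 u2 u3 κ τ : ℝ → ℝ) (x : ℝ) : ℝ :=
  deriv (deriv u1) x - deriv κ x * u2 x - κ x * deriv u2 x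
def cB1' (u1 u2 u3 κ τ : ℝ → ℝ) (x : ℝ) : ℝ :=
  deriv (deriv u2) x + deriv κ x * u1 x + κ x * deriv u1 x
    - deriv τ x * u3 x - τ x * deriv u3 x
def cC1' (u1 u2 u3 κ τ : ℝ → ℝ) (x : ℝ) : ℝ :=
  deriv (deriv u3) x + deriv τ x * u2 x + τ x * deriv u2 x

def cA1'' (u1 u2 u3 κ τ : ℝ → ℝ) (x : ℝ) : ℝ :=
  deriv (deriv (deriv u1)) x - deriv (deriv κ) x * u2 x
    - 2 * deriv κ x * deriv u2 x - κ x * deriv (deriv u2) x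
def cB1'' (u1 u2 u3 κ τ : ℝ → ℝ) (x : ℝ) : ℝ :=
  deriv (deriv (deriv u2)) x + deriv (deriv κ) x * u1 x
    + 2 * deriv κ x * deriv u1 x + κ x * deriv (deriv u1) x
    - deriv (deriv τ) x * u3 x - 2 * deriv τ x * deriv u3 x - τ x * deriv (deriv u3) x
def cC1'' (u1 u2 u3 κ τ : ℝ → ℝ) (x : ℝ) : ℝ :=
  deriv (deriv (deriv u3)) x + deriv (deriv τ) x * u2 x
    + 2 * deriv τ x * deriv u2 x + τ x * deriv (deriv u2) x

def cA2 (u1 u2 u3 κ τ : ℝ → ℝ) (x : ℝ) : ℝ :=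
  cA1' u1 u2 u3 κ τ x - κ x * cB1 u1 u2 u3 κ τ x
def cB2 (u1 u2 u3 κ τ : ℝ → ℝ) (x : ℝ) : ℝ :=
  cB1' u1 u2 u3 κ τ x + κ x * cA1 u1 u2 u3 κ τ x - τ x * cC1 u1 u2 u3 κ τ x
def cC2 (u1 u2 u3 κ τ : ℝ → ℝ) (x : ℝ) : ℝ :=
  cC1' u1 u2 u3 κ τ x + τ x * cB1 u1 u2 u3 κ τ x

def cA2' (u1 u2 u3 κ τ : ℝ → ℝ) (x : ℝ) : ℝ :=
  cA1'' u1 u2 u3 κ τ x - deriv κ x * cB1 u1 u2 u3 κ τ x - κ x * cB1' u1 u2 u3 κ τ x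
def cB2' (u1 u2 u3 κ τ : ℝ → ℝ) (x : ℝ) : ℝ :=
  cB1'' u1 u2 u3 κ τ x + deriv κ x * cA1 u1 u2 u3 κ τ x + κ x * cA1' u1 u2 u3 κ τ x
    - deriv τ x * cC1 u1 u2 u3 κ τ x - τ x * cC1' u1 u2 u3 κ τ x
def cC2' (u1 u2 u3 κ τ : ℝ → ℝ) (x : ℝ) : ℝ :=
  cC1'' u1 u2 u3 κ τ x + deriv τ x * cB1 u1 u2 u3 κ τ x + τ x * cB1' u1 u2 u3 κ τ x

def cA3 (u1 u2 u3 κ τ : ℝ → ℝ) (x : ℝ) : ℝ :=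
  cA2' u1 u2 u3 κ τ x - κ x * cB2 u1 u2 u3 κ τ x
def cB3 (u1 u2 u3 κ τ : ℝ → ℝ) (x : ℝ) : ℝ :=
  cB2' u1 u2 u3 κ τ x + κ x * cA2 u1 u2 u3 κ τ x - τ x * cC2 u1 u2 u3 κ τ x
def cC3 (u1 u2 u3 κ τ : ℝ → ℝ) (x : ℝ) : ℝ :=
  cC2' u1 u2 u3 κ τ x + τ x * cB2 u1 u2 u3 κ τ x

def Wvec (u1 u2 u3 : ℝ → ℝ) (T N B : ℝ → E3) (x : ℝ) : E3 :=
  u1 x • T x + u2 x • N x + u3 x • B x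
def W1vec (u1 u2 u3 κ τ : ℝ → ℝ) (T N B : ℝ → E3) (x : ℝ) : E3 :=
  cA1 u1 u2 u3 κ τ x • T x + cB1 u1 u2 u3 κ τ x • N x + cC1 u1 u2 u3 κ τ x • B x
def W2vec (u1 u2 u3 κ τ : ℝ → ℝ) (T N B : ℝ → E3) (x : ℝ) : E3 :=
  cA2 u1 u2 u3 κ τ x • T x + cB2 u1 u2 u3 κ τ x • N x + cC2 u1 u2 u3 κ τ x • B x
def W3vec (u1 u2 u3 κ τ : ℝ → ℝ) (T N B : ℝ → E3) (x : ℝ) : E3 :=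
  cA3 u1 u2 u3 κ τ x • T x + cB3 u1 u2 u3 κ τ x • N x + cC3 u1 u2 u3 κ τ x • B x


set_option maxHeartbeats 4000000 in
/-- **Lemma 1, first variation of `v`, `κ`, `λ`.** For a smooth variation
`Γ` of an arclength-parametrized curve `γ` with variational field
`∂ₜΓ(0,·) = u₁T + u₂N + u₃B`, the first variations of speed, curvature and modified
torsion are: `v̇ = u₁' − κu₂`, `κ̇ = u₁κ' + u₂κ²(1−λ²) + u₂'' − (λκ)'u₃ − 2λκu₃'`, and
`λ̇ = u₁λ' + u₂((λκ)''/κ² − (λκ)'κ'/κ³ + λ³κ + λκ) + u₂'(2λ'/κ + (λκ)'/κ²) + u₂''·(λ/κ)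
− u₃λλ' + u₃'(1+λ²) − u₃''·(κ'/κ³) + u₃'''/κ²`. -/
theorem stmt15
    (L : ℝ) (hL : 0 < L)
    (Γ : ℝ → ℝ → E3)
    (hΓ : ContDiff ℝ (⊤ : ℕ∞) (fun p : ℝ × ℝ => Γ p.1 p.2))
    (γ T N B : ℝ → E3) (κ τ lam : ℝ → ℝ)
    (hγ0 : ∀ s, γ s = Γ 0 s)
    (hκsm : ContDiff ℝ (⊤ : ℕ∞) κ) (hτsm : ContDiff ℝ (⊤ : ℕ∞) τ)
    (hT : ∀ s, T s = deriv γ s)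
    (hunit : ∀ s, ‖deriv γ s‖ = 1)
    (hκ : ∀ s, κ s = ‖deriv (deriv γ) s‖)
    (hκpos : ∀ s, 0 < κ s)
    (hN : ∀ s, N s = (κ s)⁻¹ • deriv T s)
    (hB : ∀ s, B s = cross (T s) (N s))
    (hfrN : ∀ s, deriv N s = (-(κ s)) • T s + τ s • B s)
    (hfrB : ∀ s, deriv B s = (-(τ s)) • N s)
    (hlam : ∀ s, lam s = τ s / κ s)
    (vf κf τf lamf : ℝ → ℝ → ℝ)
    (hvf : ∀ t s, vf t s = ‖deriv (Γ t) s‖)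
    (hκf : ∀ t s, κf t s
      = ‖cross (deriv (Γ t) s) (deriv (deriv (Γ t)) s)‖ / vf t s ^ 3)
    (hτf : ∀ t s, τf t s
      = ⟪deriv (Γ t) s, cross (deriv (deriv (Γ t)) s) (deriv (deriv (deriv (Γ t))) s)⟫
          / ‖cross (deriv (Γ t) s) (deriv (deriv (Γ t)) s)‖ ^ 2)
    (hlamf : ∀ t s, lamf t s = τf t s / κf t s)
    (hwell : ∃ ε > (0:ℝ), ∀ t, |t| < ε → ∀ s ∈ Set.Icc (0 : ℝ) L, 0 < κf t s)
    (hsm : ∀ s ∈ Set.Icc (0 : ℝ) L,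
      ContDiffAt ℝ (⊤ : ℕ∞) (fun p : ℝ × ℝ => vf p.1 p.2) (0, s) ∧
      ContDiffAt ℝ (⊤ : ℕ∞) (fun p : ℝ × ℝ => κf p.1 p.2) (0, s) ∧
      ContDiffAt ℝ (⊤ : ℕ∞) (fun p : ℝ × ℝ => lamf p.1 p.2) (0, s))
    (u1 u2 u3 : ℝ → ℝ)
    (hu1 : ContDiff ℝ (⊤ : ℕ∞) u1) (hu2 : ContDiff ℝ (⊤ : ℕ∞) u2) (hu3 : ContDiff ℝ (⊤ : ℕ∞) u3)
    (hu : ∀ s, deriv (fun t => Γ t s) 0 = u1 s • T s + u2 s • N s + u3 s • B s) :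
    ∀ s ∈ Set.Icc (0 : ℝ) L,
      deriv (fun t => vf t s) 0 = deriv u1 s - κ s * u2 s ∧
      deriv (fun t => κf t s) 0
        = u1 s * deriv κ s + u2 s * (κ s ^ 2 * (1 - lam s ^ 2)) + deriv (deriv u2) s
          - deriv (fun x => lam x * κ x) s * u3 s - 2 * lam s * κ s * deriv u3 s ∧
      deriv (fun t => lamf t s) 0
        = u1 s * deriv lam s
          + u2 s * (deriv (deriv (fun x => lam x * κ x)) s / κ s ^ 2
              - deriv (fun x => lam x * κ x) s * deriv κ s / κ s ^ 3
              + lam s ^ 3 * κ s + lam s * κ s)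
          + deriv u2 s * (2 * deriv lam s / κ s + deriv (fun x => lam x * κ x) s / κ s ^ 2)
          + deriv (deriv u2) s * (lam s / κ s)
          - u3 s * (lam s * deriv lam s)
          + deriv u3 s * (1 + lam s ^ 2)
          - deriv (deriv u3) s * (deriv κ s / κ s ^ 3)
          + deriv (deriv (deriv u3)) s / κ s ^ 2 := by
  -- ### basic smoothness and function identities
  have hκne : ∀ x, κ x ≠ 0 := fun x => ne_of_gt (hκpos x)
  have hγfun : γ = Γ 0 := funext hγ0
  have hγsm : ContDiff ℝ (⊤ : ℕ∞) γ := by rw [hγfun]; exact smooth_slice_snd hΓ 0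
  have hTfun : T = deriv γ := funext hT
  have hTsm : ContDiff ℝ (⊤ : ℕ∞) T := by rw [hTfun]; exact hγsm.derivTop
  have hT'sm : ContDiff ℝ (⊤ : ℕ∞) (deriv T) := hTsm.derivTop
  have hTder : ∀ x, HasDerivAt T (κ x • N x) x := by
    intro x
    have hd := (hTsm.differentiable (by simp) x).hasDerivAt
    have he : deriv T x = κ x • N x := by
      rw [hN x, smul_smul, mul_inv_cancel₀ (hκne x), one_smul]
    rwa [he] at hd
  have hNsm : ContDiff ℝ (⊤ : ℕ∞) N := by
    have hNf : N = fun x => (κ x)⁻¹ • deriv T x := funext hN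
    rw [hNf]
    exact (hκsm.inv hκne).smul hT'sm
  have hBsm : ContDiff ℝ (⊤ : ℕ∞) B := by
    have hBf : B = fun x => crossL (T x) (N x) := by funext x; rw [hB x]; rfl
    rw [hBf]
    exact ((crossL.contDiff).comp hTsm).clm_apply hNsm
  have hNder : ∀ x, HasDerivAt N ((-(κ x)) • T x + τ x • B x) x := by
    intro x
    have hd := (hNsm.differentiable (by simp) x).hasDerivAt
    rwa [hfrN x] at hd
  have hBder : ∀ x, HasDerivAt B ((-(τ x)) • N x) x := by
    intro x
    have hd := (hBsm.differentiable (by simp) x).hasDerivAt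
    rwa [hfrB x] at hd
  -- ### orthonormality of the frame
  have hTT : ∀ x, ⟪T x, T x⟫ = 1 := by
    intro x
    rw [real_inner_self_eq_norm_sq, hT x, hunit x]; norm_num
  have hTnorm : ∀ x, ‖T x‖ = 1 := by
    intro x; rw [hT x]; exact hunit x
  have hNN : ∀ x, ⟪N x, N x⟫ = 1 := by
    intro x
    have hκval : κ x = ‖deriv T x‖ := by rw [hκ x, hTfun]
    rw [(hTder x).deriv, norm_smul, Real.norm_eq_abs, abs_of_pos (hκpos x)] at hκval
    have hNn : ‖N x‖ = 1 := by
      have h1 : κ x * ‖N x‖ = κ x * 1 := by rw [mul_one, ← hκval]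
      exact mul_left_cancel₀ (hκne x) h1
    rw [real_inner_self_eq_norm_sq, hNn]; norm_num
  have hTN : ∀ x, ⟪T x, N x⟫ = 0 := by
    intro x
    have hconst : (fun y => ⟪T y, T y⟫) = fun _ => (1:ℝ) := funext fun y => hTT y
    have hd : HasDerivAt (fun y => ⟪T y, T y⟫) (⟪T x, κ x • N x⟫ + ⟪κ x • N x, T x⟫) x :=
      (hTder x).inner ℝ (hTder x)
    have h0 : deriv (fun y => ⟪T y, T y⟫) x = 0 := by rw [hconst]; simp
    have hval := hd.deriv
    rw [h0] at hval
    rw [real_inner_smul_right, real_inner_smul_left, real_inner_comm (N x) (T x)] at hval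
    have h2 : κ x * ⟪N x, T x⟫ = 0 := by linarith
    have h3 := (mul_eq_zero.mp h2).resolve_left (hκne x)
    rw [real_inner_comm]; exact h3
  have hiNT : ∀ x, ⟪N x, T x⟫ = 0 := fun x => by rw [real_inner_comm]; exact hTN x
  have hc12 : ∀ x, cross (T x) (N x) = B x := fun x => (hB x).symm
  have hc21 : ∀ x, cross (N x) (T x) = -(B x) := fun x => fr_c21 (hB x)
  have hc23 : ∀ x, cross (N x) (B x) = T x := fun x => fr_c23 (hNN x) (hTN x) (hB x)
  have hc31 : ∀ x, cross (B x) (T x) = N x := fun x => fr_c31 (hTT x) (hTN x) (hB x)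
  have hc13 : ∀ x, cross (T x) (B x) = -(N x) := fun x => fr_c13 (hTT x) (hTN x) (hB x)
  have hc32 : ∀ x, cross (B x) (N x) = -(T x) := fun x => fr_c32 (hNN x) (hTN x) (hB x)
  have hiTB : ∀ x, ⟪T x, B x⟫ = 0 := fun x => fr_i13 (hB x)
  have hiNB : ∀ x, ⟪N x, B x⟫ = 0 := fun x => fr_i23 (hB x)
  have hiBB : ∀ x, ⟪B x, B x⟫ = 1 := fun x => fr_i33 (hTT x) (hNN x) (hTN x) (hB x)
  have hiBT : ∀ x, ⟪B x, T x⟫ = 0 := fun x => by rw [real_inner_comm]; exact hiTB x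
  have hiBN : ∀ x, ⟪B x, N x⟫ = 0 := fun x => by rw [real_inner_comm]; exact hiNB x
  have hBnorm : ∀ x, ‖B x‖ = 1 := by
    intro x
    have h := hiBB x
    rw [real_inner_self_eq_norm_sq] at h
    nlinarith [norm_nonneg (B x)]
  -- ### scalar derivative bookkeeping
  have hu1'sm := hu1.derivTop
  have hu1''sm := hu1'sm.derivTop
  have hu2'sm := hu2.derivTop
  have hu2''sm := hu2'sm.derivTop
  have hu3'sm := hu3.derivTop
  have hu3''sm := hu3'sm.derivTop
  have hκ'sm := hκsm.derivTop
  have hτ'sm := hτsm.derivTop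
  have Du1 : ∀ x, HasDerivAt u1 (deriv u1 x) x := fun x => (hu1.differentiable (by simp) x).hasDerivAt
  have Du2 : ∀ x, HasDerivAt u2 (deriv u2 x) x := fun x => (hu2.differentiable (by simp) x).hasDerivAt
  have Du3 : ∀ x, HasDerivAt u3 (deriv u3 x) x := fun x => (hu3.differentiable (by simp) x).hasDerivAt
  have Du1' : ∀ x, HasDerivAt (deriv u1) (deriv (deriv u1) x) x :=
    fun x => (hu1'sm.differentiable (by simp) x).hasDerivAt
  have Du2' : ∀ x, HasDerivAt (deriv u2) (deriv (deriv u2) x) x :=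
    fun x => (hu2'sm.differentiable (by simp) x).hasDerivAt
  have Du3' : ∀ x, HasDerivAt (deriv u3) (deriv (deriv u3) x) x :=
    fun x => (hu3'sm.differentiable (by simp) x).hasDerivAt
  have Du1'' : ∀ x, HasDerivAt (deriv (deriv u1)) (deriv (deriv (deriv u1)) x) x :=
    fun x => (hu1''sm.differentiable (by simp) x).hasDerivAt
  have Du2'' : ∀ x, HasDerivAt (deriv (deriv u2)) (deriv (deriv (deriv u2)) x) x :=
    fun x => (hu2''sm.differentiable (by simp) x).hasDerivAt
  have Du3'' : ∀ x, HasDerivAt (deriv (deriv u3)) (deriv (deriv (deriv u3)) x) x :=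
    fun x => (hu3''sm.differentiable (by simp) x).hasDerivAt
  have Dκ : ∀ x, HasDerivAt κ (deriv κ x) x := fun x => (hκsm.differentiable (by simp) x).hasDerivAt
  have Dτ : ∀ x, HasDerivAt τ (deriv τ x) x := fun x => (hτsm.differentiable (by simp) x).hasDerivAt
  have Dκ' : ∀ x, HasDerivAt (deriv κ) (deriv (deriv κ) x) x :=
    fun x => (hκ'sm.differentiable (by simp) x).hasDerivAt
  have Dτ' : ∀ x, HasDerivAt (deriv τ) (deriv (deriv τ) x) x :=
    fun x => (hτ'sm.differentiable (by simp) x).hasDerivAt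
  -- HasDerivAt facts for the coefficient functions
  have DA1 : ∀ x, HasDerivAt (cA1 u1 u2 u3 κ τ) (cA1' u1 u2 u3 κ τ x) x := by
    intro x
    have h := (Du1' x).sub ((Dκ x).mul (Du2 x))
    have he : cA1' u1 u2 u3 κ τ x
        = deriv (deriv u1) x - (deriv κ x * u2 x + κ x * deriv u2 x) := by
      simp [cA1']; ring
    rw [he]; exact h
  have DB1 : ∀ x, HasDerivAt (cB1 u1 u2 u3 κ τ) (cB1' u1 u2 u3 κ τ x) x := by
    intro x
    have h := ((Du2' x).add ((Dκ x).mul (Du1 x))).sub ((Dτ x).mul (Du3 x))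
    have he : cB1' u1 u2 u3 κ τ x
        = deriv (deriv u2) x + (deriv κ x * u1 x + κ x * deriv u1 x)
          - (deriv τ x * u3 x + τ x * deriv u3 x) := by
      simp [cB1']; ring
    rw [he]; exact h
  have DC1 : ∀ x, HasDerivAt (cC1 u1 u2 u3 κ τ) (cC1' u1 u2 u3 κ τ x) x := by
    intro x
    have h := (Du3' x).add ((Dτ x).mul (Du2 x))
    have he : cC1' u1 u2 u3 κ τ x
        = deriv (deriv u3) x + (deriv τ x * u2 x + τ x * deriv u2 x) := by
      simp [cC1']; ring
    rw [he]; exact h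
  have DA1' : ∀ x, HasDerivAt (cA1' u1 u2 u3 κ τ) (cA1'' u1 u2 u3 κ τ x) x := by
    intro x
    have h := ((Du1'' x).sub ((Dκ' x).mul (Du2 x))).sub ((Dκ x).mul (Du2' x))
    have he : cA1'' u1 u2 u3 κ τ x
        = deriv (deriv (deriv u1)) x - (deriv (deriv κ) x * u2 x + deriv κ x * deriv u2 x)
          - (deriv κ x * deriv u2 x + κ x * deriv (deriv u2) x) := by
      simp [cA1'']; ring
    rw [he]; exact h
  have DB1' : ∀ x, HasDerivAt (cB1' u1 u2 u3 κ τ) (cB1'' u1 u2 u3 κ τ x) x := by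
    intro x
    have h := ((((Du2'' x).add ((Dκ' x).mul (Du1 x))).add ((Dκ x).mul (Du1' x))).sub
      ((Dτ' x).mul (Du3 x))).sub ((Dτ x).mul (Du3' x))
    have he : cB1'' u1 u2 u3 κ τ x
        = deriv (deriv (deriv u2)) x + (deriv (deriv κ) x * u1 x + deriv κ x * deriv u1 x)
          + (deriv κ x * deriv u1 x + κ x * deriv (deriv u1) x)
          - (deriv (deriv τ) x * u3 x + deriv τ x * deriv u3 x)
          - (deriv τ x * deriv u3 x + τ x * deriv (deriv u3) x) := by
      simp [cB1'']; ring
    rw [he]; exact h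
  have DC1' : ∀ x, HasDerivAt (cC1' u1 u2 u3 κ τ) (cC1'' u1 u2 u3 κ τ x) x := by
    intro x
    have h := ((Du3'' x).add ((Dτ' x).mul (Du2 x))).add ((Dτ x).mul (Du2' x))
    have he : cC1'' u1 u2 u3 κ τ x
        = deriv (deriv (deriv u3)) x + (deriv (deriv τ) x * u2 x + deriv τ x * deriv u2 x)
          + (deriv τ x * deriv u2 x + τ x * deriv (deriv u2) x) := by
      simp [cC1'']; ring
    rw [he]; exact h
  have DA2 : ∀ x, HasDerivAt (cA2 u1 u2 u3 κ τ) (cA2' u1 u2 u3 κ τ x) x := by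
    intro x
    have h := (DA1' x).sub ((Dκ x).mul (DB1 x))
    have he : cA2' u1 u2 u3 κ τ x
        = cA1'' u1 u2 u3 κ τ x
          - (deriv κ x * cB1 u1 u2 u3 κ τ x + κ x * cB1' u1 u2 u3 κ τ x) := by
      simp [cA2']; ring
    rw [he]; exact h
  have DB2 : ∀ x, HasDerivAt (cB2 u1 u2 u3 κ τ) (cB2' u1 u2 u3 κ τ x) x := by
    intro x
    have h := ((DB1' x).add ((Dκ x).mul (DA1 x))).sub ((Dτ x).mul (DC1 x))
    have he : cB2' u1 u2 u3 κ τ x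
        = cB1'' u1 u2 u3 κ τ x
          + (deriv κ x * cA1 u1 u2 u3 κ τ x + κ x * cA1' u1 u2 u3 κ τ x)
          - (deriv τ x * cC1 u1 u2 u3 κ τ x + τ x * cC1' u1 u2 u3 κ τ x) := by
      simp [cB2']; ring
    rw [he]; exact h
  have DC2 : ∀ x, HasDerivAt (cC2 u1 u2 u3 κ τ) (cC2' u1 u2 u3 κ τ x) x := by
    intro x
    have h := (DC1' x).add ((Dτ x).mul (DB1 x))
    have he : cC2' u1 u2 u3 κ τ x
        = cC1'' u1 u2 u3 κ τ x
          + (deriv τ x * cB1 u1 u2 u3 κ τ x + τ x * cB1' u1 u2 u3 κ τ x) := by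
      simp [cC2']; ring
    rw [he]; exact h
  -- ### derivatives of the frame combinations
  have hDW : ∀ x, HasDerivAt (Wvec u1 u2 u3 T N B) (W1vec u1 u2 u3 κ τ T N B x) x := by
    intro x
    have h := deriv_frame_comb (hTder x) (hNder x) (hBder x) (Du1 x) (Du2 x) (Du3 x)
    exact h
  have hDW1 : ∀ x, HasDerivAt (W1vec u1 u2 u3 κ τ T N B) (W2vec u1 u2 u3 κ τ T N B x) x := by
    intro x
    have h := deriv_frame_comb (hTder x) (hNder x) (hBder x) (DA1 x) (DB1 x) (DC1 x)
    exact h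
  have hDW2 : ∀ x, HasDerivAt (W2vec u1 u2 u3 κ τ T N B) (W3vec u1 u2 u3 κ τ T N B x) x := by
    intro x
    have h := deriv_frame_comb (hTder x) (hNder x) (hBder x) (DA2 x) (DB2 x) (DC2 x)
    exact h
  -- ### mixed partials: t-derivatives of s-derivatives of Γ at t = 0
  have hWfun : (fun y => deriv (fun t => Γ t y) 0) = Wvec u1 u2 u3 T N B := funext fun y => hu y
  have hH1sm : ContDiff ℝ (⊤ : ℕ∞) (fun p : ℝ × ℝ => deriv (Γ p.1) p.2) := smooth_partial_snd hΓ
  have hH2sm : ContDiff ℝ (⊤ : ℕ∞) (fun p : ℝ × ℝ => deriv (deriv (Γ p.1)) p.2) :=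
    smooth_partial_snd (F := fun t => deriv (Γ t)) hH1sm
  have hH3sm : ContDiff ℝ (⊤ : ℕ∞) (fun p : ℝ × ℝ => deriv (deriv (deriv (Γ p.1))) p.2) :=
    smooth_partial_snd (F := fun t => deriv (deriv (Γ t))) hH2sm
  have hw1 : ∀ x, deriv (fun t => deriv (Γ t) x) 0 = W1vec u1 u2 u3 κ τ T N B x := by
    intro x
    rw [swap_partial (F := Γ) hΓ 0 x, hWfun]
    exact (hDW x).deriv
  have hw1fun : (fun y => deriv (fun t => deriv (Γ t) y) 0) = W1vec u1 u2 u3 κ τ T N B :=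
    funext fun y => hw1 y
  have hw2 : ∀ x, deriv (fun t => deriv (deriv (Γ t)) x) 0 = W2vec u1 u2 u3 κ τ T N B x := by
    intro x
    rw [swap_partial (F := fun t => deriv (Γ t)) hH1sm 0 x, hw1fun]
    exact (hDW1 x).deriv
  have hw2fun : (fun y => deriv (fun t => deriv (deriv (Γ t)) y) 0)
      = W2vec u1 u2 u3 κ τ T N B := funext fun y => hw2 y
  have hw3 : ∀ x, deriv (fun t => deriv (deriv (deriv (Γ t))) x) 0
      = W3vec u1 u2 u3 κ τ T N B x := by
    intro x
    rw [swap_partial (F := fun t => deriv (deriv (Γ t))) hH2sm 0 x, hw2fun]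
    exact (hDW2 x).deriv
  -- ### values at t = 0
  have hP10 : ∀ x, deriv (Γ 0) x = T x := by
    intro x; rw [← hγfun, ← hTfun]
  have hP20 : ∀ x, deriv (deriv (Γ 0)) x = κ x • N x := by
    intro x; rw [← hγfun, ← hTfun]; exact (hTder x).deriv
  have hP30 : ∀ x, deriv (deriv (deriv (Γ 0))) x
      = κ x • ((-(κ x)) • T x + τ x • B x) + deriv κ x • N x := by
    intro x
    rw [← hγfun, ← hTfun]
    have hfunT : deriv T = fun y => κ y • N y := funext fun y => (hTder y).deriv
    rw [hfunT]
    exact ((Dκ x).smul (hNder x)).deriv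
  -- ### now fix s
  intro s hs
  -- slice HasDerivAt facts in the t direction at t = 0
  have hH1t : HasDerivAt (fun t => deriv (Γ t) s) (W1vec u1 u2 u3 κ τ T N B s) 0 := by
    have hd := (diffAt_slice_fst (F := fun t x => deriv (Γ t) x) hH1sm 0 s).hasDerivAt
    rwa [hw1 s] at hd
  have hH2t : HasDerivAt (fun t => deriv (deriv (Γ t)) s) (W2vec u1 u2 u3 κ τ T N B s) 0 := by
    have hd := (diffAt_slice_fst (F := fun t x => deriv (deriv (Γ t)) x) hH2sm 0 s).hasDerivAt
    rwa [hw2 s] at hd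
  have hH3t : HasDerivAt (fun t => deriv (deriv (deriv (Γ t))) s)
      (W3vec u1 u2 u3 κ τ T N B s) 0 := by
    have hd := (diffAt_slice_fst (F := fun t x => deriv (deriv (deriv (Γ t))) x) hH3sm 0 s).hasDerivAt
    rwa [hw3 s] at hd
  have hTne : T s ≠ 0 := by
    intro h; have := hTnorm s; rw [h] at this; simp at this
  -- rewriting lam in terms of τ/κ
  have hlamτκ : (fun x => lam x * κ x) = τ := by
    funext x; rw [hlam x]; field_simp [hκne x]
  have hlamfn : lam = fun x => τ x / κ x := funext hlam
  have hdlam : deriv lam s = (deriv τ s * κ s - τ s * deriv κ s) / κ s ^ 2 := by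
    rw [hlamfn]
    exact ((Dτ s).div (Dκ s) (hκne s)).deriv
  -- ### slice derivative facts shared by the three goals
  have hBne : B s ≠ 0 := by
    intro h; have := hBnorm s; rw [h] at this; simp at this
  have hc0eq : cross (deriv (Γ 0) s) (deriv (deriv (Γ 0)) s) = κ s • B s := by
    rw [hP10 s, hP20 s, crossE_smul_right, hc12 s]
  have hcne : cross (deriv (Γ 0) s) (deriv (deriv (Γ 0)) s) ≠ 0 := by
    rw [hc0eq]; exact smul_ne_zero (hκne s) hBne
  have hnκB : ‖κ s • B s‖ = κ s := by
    rw [norm_smul, hBnorm s, Real.norm_eq_abs, abs_of_pos (hκpos s), mul_one]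
  have hCt := hH1t.crossE hH2t
  have hDnormc := hCt.normE hcne
  have hDnorm1 := hH1t.normE (show deriv (Γ 0) s ≠ 0 by rw [hP10 s]; exact hTne)
  have hDv3 := hDnorm1.pow 3
  have hdenne : ‖deriv (Γ 0) s‖ ^ 3 ≠ 0 := by
    rw [hP10 s, hTnorm s]; norm_num
  have hDκ := hDnormc.div hDv3 hdenne
  simp only [Pi.div_def, Pi.pow_def] at hDκ
  have hκfn : (fun t => κf t s)
      = fun t => ‖cross (deriv (Γ t) s) (deriv (deriv (Γ t)) s)‖ / ‖deriv (Γ t) s‖ ^ 3 :=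
    funext fun t => by rw [hκf t s, hvf t s]
  have hg3 := hH2t.crossE hH3t
  have hnum := hH1t.inner ℝ hg3
  have hden2 := hDnormc.pow 2
  have hd2ne : ‖cross (deriv (Γ 0) s) (deriv (deriv (Γ 0)) s)‖ ^ 2 ≠ 0 :=
    pow_ne_zero 2 (norm_ne_zero_iff.mpr hcne)
  have hDτ' := hnum.div hden2 hd2ne
  simp only [Pi.div_def, Pi.pow_def] at hDτ'
  have hκ0ne : ‖cross (deriv (Γ 0) s) (deriv (deriv (Γ 0)) s)‖ / ‖deriv (Γ 0) s‖ ^ 3 ≠ 0 := by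
    rw [hc0eq, hnκB, hP10 s, hTnorm s]
    simpa using hκne s
  have hDlam := hDτ'.div hDκ hκ0ne
  simp only [Pi.div_def, Pi.pow_def] at hDlam
  have hlamfn3 : (fun t => lamf t s)
      = fun t => ⟪deriv (Γ t) s,
            cross (deriv (deriv (Γ t)) s) (deriv (deriv (deriv (Γ t))) s)⟫
          / ‖cross (deriv (Γ t) s) (deriv (deriv (Γ t)) s)‖ ^ 2
          / (‖cross (deriv (Γ t) s) (deriv (deriv (Γ t)) s)‖ / ‖deriv (Γ t) s‖ ^ 3) :=
    funext fun t => by rw [hlamf t s, hτf t s, hκf t s, hvf t s]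
  have hτfn : (fun t => τf t s)
      = fun t => ⟪deriv (Γ t) s,
            cross (deriv (deriv (Γ t)) s) (deriv (deriv (deriv (Γ t))) s)⟫
          / ‖cross (deriv (Γ t) s) (deriv (deriv (Γ t)) s)‖ ^ 2 :=
    funext fun t => hτf t s
  have hlamfn2 : (fun t => lamf t s) = fun t => τf t s / κf t s :=
    funext fun t => hlamf t s
  -- clean forms of the slice derivatives
  have hκc : HasDerivAt (fun t => κf t s)
      (cB2 u1 u2 u3 κ τ s - 2 * κ s * cA1 u1 u2 u3 κ τ s) 0 := by
    rw [hκfn]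
    refine hDκ.congr_deriv ?_
    simp only [hP10, hP20, hP30]
    simp only [W1vec, W2vec, crossE_add_left, crossE_add_right, crossE_smul_left,
      crossE_smul_right, crossE_self, hc12, hc21, hc23, hc31, hc13, hc32,
      inner_add_left, inner_add_right, real_inner_smul_left, real_inner_smul_right,
      inner_neg_left, inner_neg_right, inner_zero_left, inner_zero_right,
      hTT, hNN, hiBB, hTN, hiNT, hiTB, hiBT, hiNB, hiBN, hTnorm, hnκB,
      smul_smul, smul_zero, smul_neg, mul_zero, mul_one, zero_mul, one_mul,
      add_zero, zero_add, neg_zero, mul_neg, neg_neg]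
    field_simp [hκne s]
    ring
  have hτc : HasDerivAt (fun t => τf t s)
      ((κ s ^ 3 * cC1 u1 u2 u3 κ τ s - κ s ^ 2 * τ s * cA1 u1 u2 u3 κ τ s
        - deriv κ s * cC2 u1 u2 u3 κ τ s - κ s * τ s * cB2 u1 u2 u3 κ τ s
        + κ s * cC3 u1 u2 u3 κ τ s) / κ s ^ 2) 0 := by
    rw [hτfn]
    refine hDτ'.congr_deriv ?_
    simp only [hP10, hP20, hP30]
    simp only [W1vec, W2vec, W3vec, crossE_add_left, crossE_add_right, crossE_smul_left,
      crossE_smul_right, crossE_self, hc12, hc21, hc23, hc31, hc13, hc32,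
      inner_add_left, inner_add_right, real_inner_smul_left, real_inner_smul_right,
      inner_neg_left, inner_neg_right, inner_zero_left, inner_zero_right,
      hTT, hNN, hiBB, hTN, hiNT, hiTB, hiBT, hiNB, hiBN, hTnorm, hnκB,
      smul_smul, smul_zero, smul_neg, mul_zero, mul_one, zero_mul, one_mul,
      add_zero, zero_add, neg_zero, mul_neg, neg_neg]
    field_simp [hκne s]
    ring
  have hκf0 : κf 0 s = κ s := by
    rw [hκf 0 s, hvf 0 s, hc0eq, hnκB, hP10 s, hTnorm s]
    norm_num
  have hτf0 : τf 0 s = τ s := by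
    rw [hτf 0 s, hc0eq, hnκB]
    simp only [hP10, hP20, hP30]
    simp only [crossE_add_left, crossE_add_right, crossE_smul_left,
      crossE_smul_right, crossE_self, hc12, hc21, hc23, hc31, hc13, hc32,
      inner_add_left, inner_add_right, real_inner_smul_left, real_inner_smul_right,
      inner_neg_left, inner_neg_right, inner_zero_left, inner_zero_right,
      hTT, hNN, hiBB, hTN, hiNT, hiTB, hiBT, hiNB, hiBN,
      smul_smul, smul_zero, smul_neg, mul_zero, mul_one, zero_mul, one_mul,
      add_zero, zero_add, neg_zero, mul_neg, neg_neg]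
    field_simp [hκne s]
  have hκf0ne : κf 0 s ≠ 0 := by rw [hκf0]; exact hκne s
  have hlamc := hτc.div hκc hκf0ne
  simp only [Pi.div_def, hκf0, hτf0] at hlamc
  refine ⟨?_, ?_, ?_⟩
  -- ## Goal 1 : variation of speed
  · have hvfn : (fun t => vf t s) = fun t => ‖deriv (Γ t) s‖ := funext fun t => hvf t s
    have hDv := hH1t.normE (show deriv (Γ 0) s ≠ 0 by rw [hP10 s]; exact hTne)
    rw [hvfn, hDv.deriv, hP10 s, hTnorm s]
    simp only [W1vec, inner_add_right, real_inner_smul_right, hTT s, hTN s, hiTB s]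
    simp [cA1]
  -- ## Goal 2 : variation of curvature
  · rw [hκc.deriv]
    rw [hlamτκ, hlam s]
    simp only [cA1, cB1, cC1, cA1', cB1', cC1', cA2, cB2, cC2]
    field_simp [hκne s]
    ring
  -- ## Goal 3 : variation of modified torsion
  · rw [hlamfn2, hlamc.deriv]
    rw [hlamτκ, hdlam, hlam s]
    simp only [cA3, cB3, cC3, cA2', cB2', cC2', cA1'', cB1'', cC1'',
      cA2, cB2, cC2, cA1', cB1', cC1', cA1, cB1, cC1]
    generalize deriv (deriv (deriv u3)) s = c3
    generalize deriv (deriv (deriv u1)) s = a3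
    generalize deriv (deriv (deriv u2)) s = b3
    generalize deriv (deriv u1) s = a2
    generalize deriv (deriv u2) s = b2
    generalize deriv (deriv u3) s = c2
    generalize deriv (deriv κ) s = k2
    generalize deriv (deriv τ) s = t2
    generalize deriv u1 s = a1
    generalize deriv u2 s = b1
    generalize deriv u3 s = c1
    generalize deriv κ s = k1
    generalize deriv τ s = t1
    generalize u1 s = a0
    generalize u2 s = b0
    generalize u3 s = c0
    generalize τ s = t0
    generalize hgk : κ s = k0
    have hk0 : k0 ≠ 0 := hgk ▸ hκne s
    field_simp
    ring
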